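/- Let u = α₁⋯αₙ ∈ Γⁿ(x,x) be an oriented cycle in Q that is a Γ-path (n ≥ 2, quadratic monomial relations between consecutive arrows). Then the sequence of natural string-module morphisms M(αₙ) → M(α_{n−1}) → ⋯ → M(α₁) → M(αₙ) is exact at every term, where each map M(αᵢ₊₁) → M(αᵢ) is the composition M(αᵢ₊₁) ↠ S_{s(αᵢ₊₁)} = S_{t(αᵢ)} ↪ M(αᵢ), indices mod n. -/

import Mathlib

open scoped Classical

/-- A finite-type-free presentation of a quiver: vertices, arrows, source and target. -/
structure Quiv where
  V : Type
  E : Type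
  s : E → V
  t : E → V

namespace Quiv

variable (Q : Quiv)

/-- A (composable) path, given as the list of its arrows. -/
def IsPath (l : List Q.E) : Prop := l.Chain' (fun a b => Q.t a = Q.s b)

/-- A Γ-path for the set of monomial quadratic relations `R`:
a composable sequence of arrows each consecutive pair of which lies in `R`. -/
def GammaPath (R : Set (List Q.E)) (l : List Q.E) : Prop :=
  l.Chain' (fun a b => Q.t a = Q.s b ∧ [a, b] ∈ R)

/-- The list of arrows `l` starts at the vertex `x`. -/
def StartsAt (x : Q.V) (l : List Q.E) : Prop := ∀ h : l ≠ [], Q.s (l.head h) = x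

/-- The list of arrows `l` ends at the vertex `y`. -/
def EndsAt (y : Q.V) (l : List Q.E) : Prop := ∀ h : l ≠ [], Q.t (l.getLast h) = y

/-- `l` is a path from `x` to `y` (a stationary path when `l = []`). -/
def FromTo (x y : Q.V) (l : List Q.E) : Prop :=
  IsPath Q l ∧ StartsAt Q x l ∧ EndsAt Q y l ∧ (l = [] → x = y)

/-- An allowed path: a composable path no consecutive pair of which lies in the
set of quadratic monomial relations `R`; these are exactly the paths which are
nonzero in the quadratic monomial algebra `kQ/⟨R⟩`. -/
def Allowed (R : Set (List Q.E)) (l : List Q.E) : Prop :=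
  l.Chain' (fun a b => Q.t a = Q.s b ∧ [a, b] ∉ R)

/-- The composition `u ∘_{s,r} v = α₁⋯α_{s-1} β₁⋯βₘ α_r⋯αₙ` of the paths
`u = α₁⋯αₙ` and `v = β₁⋯βₘ` at the (1-indexed) positions `s ≤ r`. -/
def compSR (u v : List Q.E) (s r : ℕ) : List Q.E := u.take (s - 1) ++ v ++ u.drop (r - 1)

/-- The composition `u ∘_s v` at position `s`, i.e. `u ∘_{s,s+1} v`: replace the `s`-th
arrow of `u` by the path `v`. -/
def compS (u v : List Q.E) (s : ℕ) : List Q.E := u.take (s - 1) ++ v ++ u.drop s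

/-- `(u,v)` is an `(s,r)` Γ-bypass. -/
def IsBypassSR (R : Set (List Q.E)) (u v : List Q.E) (s r : ℕ) : Prop :=
  1 ≤ s ∧ s ≤ r ∧ r ≤ u.length ∧ GammaPath Q R (compSR Q u v s r)

/-- `(u,v)` is an `(s,s+1)` Γ-bypass. -/
def IsBypass (R : Set (List Q.E)) (u v : List Q.E) (s : ℕ) : Prop :=
  1 ≤ s ∧ s ≤ u.length ∧ GammaPath Q R (compS Q u v s)

end Quiv

namespace Quiv

/-- A walk in the quiver `Q`: a base vertex together with a list of letters, each letter
being an arrow together with a direction (`true` = direct letter, `false` = inverse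
letter). -/
structure Walk (Q : Quiv) where
  base : Q.V
  letters : List (Q.E × Bool)

namespace Walk

/-- The endpoint of a letter. -/
def nextV (Q : Quiv) (v : Q.V) (l : Q.E × Bool) : Q.V := if l.2 then Q.t l.1 else Q.s l.1

/-- The starting point of a letter. -/
def startV (Q : Quiv) (l : Q.E × Bool) : Q.V := if l.2 then Q.s l.1 else Q.t l.1

variable {Q : Quiv} (W : Walk Q)

/-- The `i`-th vertex of a walk (there are `length + 1` of them). -/
def vtx (i : ℕ) : Q.V := (W.letters.take i).foldl (nextV Q) W.base

/-- The walk is well-formed: each letter starts where the previous one ends. -/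
def OK : Prop := ∀ i : Fin W.letters.length, startV Q (W.letters.get i) = W.vtx i

/-- The walk is reduced: no letter is immediately followed by its formal inverse. -/
def Reduced : Prop :=
  ∀ i, ∀ h : i + 1 < W.letters.length,
    W.letters.get ⟨i + 1, h⟩ ≠
      ((W.letters.get ⟨i, by omega⟩).1, !(W.letters.get ⟨i, by omega⟩).2)

/-- The walk avoids the monomial relations `R`: no contiguous subwalk consisting of
direct letters is a path of `R`, and no contiguous subwalk consisting of inverse letters
is the reverse of a path of `R`. -/
def Avoids (R : Set (List Q.E)) : Prop :=
  ¬ ∃ i m : ℕ, 1 ≤ m ∧ i + m ≤ W.letters.length ∧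
    ((((W.letters.drop i).take m).map Prod.fst ∈ R ∧
        ∀ x ∈ (W.letters.drop i).take m, x.2 = true) ∨
      ((((W.letters.drop i).take m).map Prod.fst).reverse ∈ R ∧
        ∀ x ∈ (W.letters.drop i).take m, x.2 = false))

/-- The walk is a string for the monomial relations `R`. -/
def IsString (R : Set (List Q.E)) : Prop := W.OK ∧ W.Reduced ∧ W.Avoids R

end Walk

/-- The walk consisting of the single direct letter given by an arrow. -/
def arrowWalk (Q : Quiv) (a : Q.E) : Walk Q := ⟨Q.s a, [(a, true)]⟩

/-- The stationary walk at a vertex. -/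
def trivWalk (Q : Quiv) (x : Q.V) : Walk Q := ⟨x, []⟩

/-- A representation of the quiver `Q` over the field `k` (equivalently, a module over
the path algebra; a module over `kQ/I` when the maps of the arrows of a relation of `I`
compose to zero). -/
structure Rep (Q : Quiv) (k : Type) [Field k] where
  carrier : Q.V → Type
  [acg : ∀ v, AddCommGroup (carrier v)]
  [mod : ∀ v, Module k (carrier v)]
  map : ∀ e : Q.E, carrier (Q.s e) →ₗ[k] carrier (Q.t e)

attribute [instance] Rep.acg Rep.mod

/-- A morphism of representations. -/
structure RepHom {Q : Quiv} {k : Type} [Field k] (X Y : Rep Q k) where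
  app : ∀ v, X.carrier v →ₗ[k] Y.carrier v
  comm : ∀ e : Q.E, (Y.map e).comp (app (Q.s e)) = (app (Q.t e)).comp (X.map e)

namespace RepHom

variable {Q : Quiv} {k : Type} [Field k]

/-- Composition of morphisms of representations. -/
def comp {X Y Z : Rep Q k} (g : RepHom Y Z) (f : RepHom X Y) : RepHom X Z where
  app v := (g.app v).comp (f.app v)
  comm e := by
    rw [← LinearMap.comp_assoc, g.comm, LinearMap.comp_assoc, f.comm,
      LinearMap.comp_assoc]

/-- The identity morphism of a representation. -/
def id (X : Rep Q k) : RepHom X X where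
  app v := LinearMap.id
  comm e := by simp

/-- A morphism of representations is an isomorphism when it has a two-sided inverse. -/
def IsIso {X Y : Rep Q k} (f : RepHom X Y) : Prop :=
  ∃ g : RepHom Y X, g.comp f = RepHom.id X ∧ f.comp g = RepHom.id Y

/-- A morphism of representations is nonzero. -/
def NeZero {X Y : Rep Q k} (f : RepHom X Y) : Prop := ∃ v x, f.app v x ≠ 0

end RepHom

/-- A representation is indecomposable: it is nonzero and its only idempotent
endomorphisms are `0` and the identity. -/
def Indecomposable {Q : Quiv} {k : Type} [Field k] (X : Rep Q k) : Prop :=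
  (∃ v, ∃ x : X.carrier v, x ≠ 0) ∧
    ∀ f : RepHom X X, f.comp f = f → (∀ v x, f.app v x = 0) ∨ f = RepHom.id X

/-- The string module `M(w)` of a walk `w`: at the vertex `v` it has one basis element
for every vertex position of the walk lying at `v`, and an arrow acts by the sum of the
identity maps prescribed by the letters of the walk in which it appears. -/
noncomputable def StringMod (k : Type) [Field k] (Q : Quiv) (W : Walk Q) : Rep Q k where
  carrier v := {i : Fin (W.letters.length + 1) // W.vtx (i : ℕ) = v} → k
  map e :=
    ∑ i : Fin W.letters.length,
      ((if h : W.letters.get i = (e, true) ∧ W.vtx (i : ℕ) = Q.s e ∧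
            W.vtx ((i : ℕ) + 1) = Q.t e then
          (LinearMap.single k (fun _ => k) ⟨i.succ, by simpa using h.2.2⟩).comp
            (LinearMap.proj ⟨i.castSucc, by simpa using h.2.1⟩)
        else 0)
      + (if h : W.letters.get i = (e, false) ∧ W.vtx ((i : ℕ) + 1) = Q.s e ∧
            W.vtx (i : ℕ) = Q.t e then
          (LinearMap.single k (fun _ => k) ⟨i.castSucc, by simpa using h.2.2⟩).comp
            (LinearMap.proj ⟨i.succ, by simpa using h.2.1⟩)
        else 0))

/-- The natural "top-to-socle" morphisms between string modules: `φ` is the morphism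
whose matrix has a single nonzero entry, equal to `1`, between the basis vector at the
walk position `posSrc` of the source and the one at the walk position `posTgt` of the
target. -/
def IsEntryMap {Q : Quiv} {k : Type} [Field k] (Wb Wa : Walk Q) (posSrc posTgt : ℕ)
    (φ : RepHom (StringMod k Q Wb) (StringMod k Q Wa)) : Prop :=
  ∀ v (x : (StringMod k Q Wb).carrier v) jp, φ.app v x jp =
    if (jp.1 : ℕ) = posTgt then
      (∑ ip, if (ip.1 : ℕ) = posSrc then x ip else 0)
    else 0

end Quiv

section Aux
open Quiv Quiv.Walk

variable {Q : Quiv} {k : Type} [Field k]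

lemma add_ap (W : Walk Q) (v : Q.V) (x y : (StringMod k Q W).carrier v) (i) :
    (x + y) i = x i + y i := rfl

lemma smul_ap (W : Walk Q) (v : Q.V) (r : k) (x : (StringMod k Q W).carrier v) (i) :
    (r • x) i = r * x i := rfl

lemma arrow_map_apply (c e : Q.E) (y : (StringMod k Q (arrowWalk Q c)).carrier (Q.s e))
    (jp : {i : Fin ((arrowWalk Q c).letters.length + 1) // (arrowWalk Q c).vtx i = Q.t e}) :
    (StringMod k Q (arrowWalk Q c)).map e y jp =
      if c = e ∧ (jp.1 : ℕ) = 1 then ∑ ip, (if (ip.1 : ℕ) = 0 then y ip else 0) else 0 := by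
  revert y jp
  delta StringMod
  dsimp +instances only
  intro y jp
  have hs : Subsingleton (Fin (arrowWalk Q c).letters.length) :=
    Fin.subsingleton_iff_le_one.2 (by simp [arrowWalk])
  rw [@Fintype.sum_subsingleton _ _ _ _ hs _ ⟨0, by simp [arrowWalk]⟩]
  split_ifs
  · rename_i h1 h2 h3
    exact absurd h2.1 (by simp [arrowWalk])
  · rename_i h1 h2 h3
    exact absurd h2.1 (by simp [arrowWalk])
  · rename_i h1 h2 h3
    rw [add_zero, LinearMap.comp_apply, LinearMap.proj_apply, LinearMap.single_apply]
    obtain ⟨hce, hj⟩ := h3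
    subst hce
    rw [Pi.single_apply, if_pos (Subtype.ext (Fin.ext hj)),
      Fintype.sum_eq_single (⟨⟨0, by simp [arrowWalk]⟩, rfl⟩ :
        {i : Fin ((arrowWalk Q c).letters.length + 1) // (arrowWalk Q c).vtx i = Q.s c}),
      if_pos rfl]
    · rfl
    · intro ip hip
      rw [if_neg]
      intro h0
      exact hip (Subtype.ext (Fin.ext h0))
  · rename_i h1 h2 h3
    rw [add_zero, LinearMap.comp_apply, LinearMap.proj_apply, LinearMap.single_apply]
    have hce : c = e := by simpa [arrowWalk] using h1.1
    simp [Pi.single_apply, Subtype.ext_iff, Fin.ext_iff, hce] at h3 ⊢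
    intro h
    exact absurd h h3
  · rename_i h1 h2 h3
    exact absurd h2.1 (by simp [arrowWalk])
  · rename_i h1 h2 h3
    exact absurd h2.1 (by simp [arrowWalk])
  · rename_i h1 h2 h3
    obtain ⟨rfl, -⟩ := h3
    exact absurd ⟨rfl, rfl, rfl⟩ h1
  · rw [add_zero, LinearMap.zero_apply]
    rfl

noncomputable def entryApp (b a : Q.E) (v : Q.V) :
    (StringMod k Q (arrowWalk Q b)).carrier v →ₗ[k] (StringMod k Q (arrowWalk Q a)).carrier v where
  toFun x jp := if (jp.1 : ℕ) = 1 then ∑ ip, (if (ip.1 : ℕ) = 0 then x ip else 0) else 0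
  map_add' x y := by
    funext jp
    simp only [add_ap]
    show _ = (_ : k) + (_ : k)
    by_cases h : (jp.1 : ℕ) = 1 <;>
      simp [h, StringMod, Pi.add_apply, ← Finset.sum_add_distrib, ite_add_ite]
  map_smul' r x := by
    funext jp
    simp only [smul_ap, RingHom.id_apply]
    show _ = r * (_ : k)
    by_cases h : (jp.1 : ℕ) = 1 <;>
      simp [h, StringMod, Pi.smul_apply, smul_eq_mul, Finset.mul_sum, mul_ite]

lemma entryApp_apply (b a : Q.E) (v : Q.V) (x : (StringMod k Q (arrowWalk Q b)).carrier v) (jp) :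
    entryApp b a v x jp =
      if (jp.1 : ℕ) = 1 then ∑ ip, (if (ip.1 : ℕ) = 0 then x ip else 0) else 0 := rfl

noncomputable def entryHom (a b : Q.E) :
    RepHom (StringMod k Q (arrowWalk Q b)) (StringMod k Q (arrowWalk Q a)) where
  app v := entryApp b a v
  comm e := by
    apply LinearMap.ext; intro x
    funext jp
    rw [LinearMap.comp_apply, LinearMap.comp_apply, arrow_map_apply, entryApp_apply]
    simp only [arrow_map_apply, entryApp_apply]
    simp +contextual


lemma sum_pick {m : ℕ} {P : Fin m → Prop} {j : ℕ} (hjm : j < m) (hj : P ⟨j, hjm⟩)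
    (g : {i : Fin m // P i} → k) :
    (∑ ip : {i : Fin m // P i}, if (ip.1 : ℕ) = j then g ip else 0) = g ⟨⟨j, hjm⟩, hj⟩ := by
  have key : ∀ ip : {i : Fin m // P i}, ((ip.1 : ℕ) = j) ↔ ip = ⟨⟨j, hjm⟩, hj⟩ := by
    intro ip
    rw [Subtype.ext_iff, Fin.ext_iff]
  simp only [key]
  simp [Finset.sum_ite_eq']

lemma vtx_zero (a : Q.E) : (arrowWalk Q a).vtx 0 = Q.s a := rfl
lemma vtx_one (a : Q.E) : (arrowWalk Q a).vtx 1 = Q.t a := rfl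

lemma entryHom_exact (a b cc : Q.E) (hab : Q.t a = Q.s b) (hbc : Q.t b = Q.s cc) (v : Q.V) :
    LinearMap.range ((entryHom (k := k) b cc).app v) =
      LinearMap.ker ((entryHom (k := k) a b).app v) := by
  ext x
  simp only [LinearMap.mem_range, LinearMap.mem_ker]
  constructor
  · rintro ⟨z, rfl⟩
    show entryApp b a v (entryApp cc b v z) = 0
    funext jp
    simp only [entryApp_apply]
    show _ = (0 : k)
    split_ifs
    · refine Finset.sum_eq_zero ?_
      rintro ⟨⟨iv, hlt⟩, hp⟩ -
      by_cases h0 : iv = 0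
      · subst h0
        simp [entryApp]
      · simp [entryApp, h0]
    · rfl
  · intro hker
    have hx0 : ∀ h0 : (arrowWalk Q b).vtx 0 = v, x ⟨⟨0, by simp [arrowWalk]⟩, h0⟩ = 0 := by
      intro h0
      have h1 : (arrowWalk Q a).vtx 1 = v := by rw [vtx_one, hab, ← vtx_zero, h0]
      have h : entryApp b a v x ⟨⟨1, by simp [arrowWalk]⟩, h1⟩ = 0 := by
        rw [show entryApp b a v x = 0 from hker]; rfl
      rw [show entryApp b a v x ⟨⟨1, by simp [arrowWalk]⟩, h1⟩
            = ∑ ip, if (ip.1 : ℕ) = 0 then x ip else 0 from by simp [entryApp_apply],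
        sum_pick (P := fun i => (arrowWalk Q b).vtx ↑i = v) (g := x) (by simp [arrowWalk]) h0] at h
      exact h
    refine ⟨fun ip => if h : (ip.1 : ℕ) = 0 then
        x ⟨⟨1, by simp [arrowWalk]⟩, by
          rw [vtx_one, hbc, ← vtx_zero, ← h]; exact ip.2⟩ else 0, ?_⟩
    show entryApp cc b v _ = x
    funext jp
    refine (entryApp_apply cc b v _ jp).trans ?_
    by_cases hj : (jp.1 : ℕ) = 1
    · have h0c : (arrowWalk Q cc).vtx 0 = v := by
        rw [vtx_zero, ← hbc, ← vtx_one, ← hj]; exact jp.2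
      rw [if_pos hj,
        sum_pick (P := fun i => (arrowWalk Q cc).vtx ↑i = v) (by simp [arrowWalk]) h0c]
      simp only [dif_pos]
      congr 1
      exact Subtype.ext (Fin.ext hj.symm)
    · rw [if_neg hj]
      have hj0 : (jp.1 : ℕ) = 0 := by
        have h2 : (jp.1 : ℕ) < 2 := jp.1.2
        omega
      have h0 : (arrowWalk Q b).vtx 0 = v := by rw [← hj0]; exact jp.2
      rw [show jp = ⟨⟨0, by simp [arrowWalk]⟩, h0⟩ from Subtype.ext (Fin.ext hj0), hx0 h0]

end Aux
open Quiv Quiv.Walk in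
/-- Let `u = α₁⋯αₙ ∈ Γⁿ(x,x)` (`n ≥ 2`) be an oriented cycle which is
a Γ-path for the quadratic monomial relations `R`. Then the cyclic sequence of natural
top-to-socle morphisms `⋯ → M(α_{i+1}) → M(α_i) → ⋯` (indices mod `n`) is exact at every
term. -/
theorem gamma_cycle_exact
    (Q : Quiv) (R : Set (List Q.E)) (hR : ∀ l ∈ R, l.length = 2)
    (k : Type) [Field k]
    (c : List Q.E) (n : ℕ) (x : Q.V)
    (hc : Q.GammaPath R c) (hlen : c.length = n) (hn : 2 ≤ n)
    (hxx : Q.FromTo x x c) :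
    ∃ f : ∀ i : ℕ,
        RepHom
          (StringMod k Q (arrowWalk Q
            (c.getD ((i + 1) % n) (c.head (List.ne_nil_of_length_pos (by omega))))))
          (StringMod k Q (arrowWalk Q
            (c.getD (i % n) (c.head (List.ne_nil_of_length_pos (by omega)))))),
      (∀ i, IsEntryMap _ _ 0 1 (f i)) ∧
      ∀ (i : ℕ) (v : Q.V),
        LinearMap.range ((f (i + 1)).app v) = LinearMap.ker ((f i).app v) := by
  obtain ⟨hpath, hstart, hend, -⟩ := hxx
  have hcne : c ≠ [] := List.ne_nil_of_length_pos (by omega)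
  rw [IsPath, List.Chain', List.isChain_iff_getElem] at hpath
  have hstep : ∀ i : ℕ,
      Q.t (c.getD (i % n) (c.head hcne)) = Q.s (c.getD ((i + 1) % n) (c.head hcne)) := by
    intro i
    have hmod : i % n < n := Nat.mod_lt _ (by omega)
    have h1n : 1 % n = 1 := Nat.mod_eq_of_lt (by omega)
    have hrw : (i + 1) % n = (i % n + 1) % n := by rw [Nat.add_mod, h1n]
    rcases Nat.lt_or_ge (i % n + 1) n with h | h
    · have h2 : (i + 1) % n = i % n + 1 := by rw [hrw, Nat.mod_eq_of_lt h]
      rw [h2, List.getD_eq_getElem c _ (by omega), List.getD_eq_getElem c _ (by omega)]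
      exact hpath (i % n) (by omega)
    · have he : i % n = n - 1 := by omega
      have h2 : (i + 1) % n = 0 := by
        rw [hrw, he, Nat.sub_add_cancel (by omega), Nat.mod_self]
      rw [h2, he, List.getD_eq_getElem c _ (by omega), List.getD_eq_getElem c _ (by omega)]
      have hlast := hend hcne
      rw [List.getLast_eq_getElem] at hlast
      have hl : Q.t (c.get ⟨n - 1, by omega⟩) = x := by simpa [List.get_eq_getElem, hlen] using hlast
      have h0 : Q.s (c.get ⟨0, by omega⟩) = x := by
        rw [List.get_eq_getElem, List.getElem_zero]
        exact hstart hcne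
      exact hl.trans h0.symm
  refine ⟨fun i => entryHom _ _, fun i => ?_, fun i v => ?_⟩
  · intro v x jp
    rfl
  · exact entryHom_exact _ _ _ (hstep i) (hstep (i + 1)) v
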